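/- For discriminating a constant model from a quadratic model on [-1,1], with prior on b = θ_{2,1}/θ_{2,2} having second moment β = ∫ b^2 dπ̄(b) ≤ 1, the Bayesian T-criterion ∫ T(ξ, (b,1)) dπ̄(b) over symmetric three-point designs with masses (1-h)/2, h, (1-h)/2 at -1, 0, 1 equals (β + h)(1 - h) (for symmetric π̄), and is maximized at h = (1-β)/2. -/
import Mathlib


open MeasureTheory

/-- `T(ξ_h,(b,1))`: minimal weighted mean squared deviation of `x² + bx` from a
constant, for the symmetric three-point design with masses `(1-h)/2, h, (1-h)/2`
at `-1, 0, 1`. -/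
noncomputable def Tdes (h b : ℝ) : ℝ :=
  sInf (Set.range fun c : ℝ =>
    ((1 - h)/2) * ((-1:ℝ)^2 + b * (-1) - c)^2
      + h * ((0:ℝ)^2 + b * 0 - c)^2
      + ((1 - h)/2) * ((1:ℝ)^2 + b * 1 - c)^2)

lemma Tdes_eq (h b : ℝ) : Tdes h b = (1 - h) * (b^2 + h) := by
  unfold Tdes
  have hfun : ∀ c : ℝ,
      ((1 - h)/2) * ((-1:ℝ)^2 + b * (-1) - c)^2
        + h * ((0:ℝ)^2 + b * 0 - c)^2
        + ((1 - h)/2) * ((1:ℝ)^2 + b * 1 - c)^2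
      = (c - (1 - h))^2 + (1 - h) * (b^2 + h) := by
    intro c; ring
  apply le_antisymm
  · calc sInf _ ≤ ((1 - h)/2) * ((-1:ℝ)^2 + b * (-1) - (1 - h))^2
        + h * ((0:ℝ)^2 + b * 0 - (1 - h))^2
        + ((1 - h)/2) * ((1:ℝ)^2 + b * 1 - (1 - h))^2 := by
          apply csInf_le
          · refine ⟨(1 - h) * (b^2 + h), ?_⟩
            rintro x ⟨c, rfl⟩
            dsimp only
            rw [hfun c]
            nlinarith [sq_nonneg (c - (1 - h))]
          · exact ⟨1 - h, rfl⟩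
      _ = (1 - h) * (b^2 + h) := by rw [hfun]; ring
  · apply le_csInf (Set.range_nonempty _)
    rintro x ⟨c, rfl⟩
    dsimp only
    rw [hfun c]
    nlinarith [sq_nonneg (c - (1 - h))]

/-- For a symmetric prior `π̄` with second moment `β ≤ 1`, the
Bayesian T-criterion `∫ T(ξ_h,(b,1)) dπ̄(b)` over symmetric three-point designs
equals `(β + h)(1 - h)`, and is maximized at `h = (1-β)/2`. -/
theorem bayesian_T_quadratic (π : Measure ℝ) [IsProbabilityMeasure π]
    (hsym : π.map (fun b => -b) = π)
    (hInt : Integrable (fun b => b^2) π)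
    (β : ℝ) (hβ : β = ∫ b, b^2 ∂π) (hβ1 : β ≤ 1) :
    (∀ h ∈ Set.Icc (0:ℝ) 1, (∫ b, Tdes h b ∂π) = (β + h) * (1 - h)) ∧
    (∀ h ∈ Set.Icc (0:ℝ) 1,
      (∫ b, Tdes h b ∂π) ≤ ∫ b, Tdes ((1 - β)/2) b ∂π) := by
  have key : ∀ h : ℝ, (∫ b, Tdes h b ∂π) = (β + h) * (1 - h) := by
    intro h
    have : (∫ b, Tdes h b ∂π) = ∫ b, (1 - h) * (b^2 + h) ∂π := by
      simp only [Tdes_eq]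
    rw [this, integral_const_mul]
    have : (∫ b, (b^2 + h) ∂π) = (∫ b, b^2 ∂π) + h := by
      rw [integral_add hInt (integrable_const h), integral_const]
      simp
    rw [this, ← hβ]; ring
  constructor
  · intro h _; exact key h
  · intro h _
    rw [key h, key ((1 - β)/2)]
    nlinarith [sq_nonneg (h - (1 - β)/2)]
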